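/- arXiv:2512.15352 — 10 statements merged into one kernel-verified Lean document; each statement's English description precedes it below -/
import Mathlib

section
/- Let H be a complex inner product space, let k and k⊥ be orthonormal vectors in H, let θ ∈ ℝ, and let ψ = cos θ • k + sin θ • k⊥. Let Q = V_ψ ∘ V_k be the Grover operator, where V_k = id − 2 P_k and V_ψ = id − 2 P_ψ. Then for every α ∈ ℝ, Q (cos α • k + sin α • k⊥) = cos(α + 2θ) • k + sin(α + 2θ) • k⊥. -/
/-!
Write `e α := cos α • k + sin α • k⊥` for the unit circle in the plane of `k, k⊥`.
Since `⟪e θ, e β⟫ = cos (β - θ)`, the reflection `id - 2 P_{e θ}` sends `e β` to `e (2θ + π - β)`.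
As `k = e 0` and `ψ = e θ`, the two reflections of `Q` send `e α` to `e (π - α)` and then
to `e (α + 2θ)`.
-/

open scoped InnerProductSpace

namespace GroverRotation

variable (𝕜 : Type*) {H : Type*} [RCLike 𝕜] [NormedAddCommGroup H] [InnerProductSpace 𝕜 H]

noncomputable def circlePoint (k kp : H) (α : ℝ) : H :=
  (Real.cos α : 𝕜) • k + (Real.sin α : 𝕜) • kp

variable {𝕜} {k kp : H}

theorem circlePoint_zero : circlePoint 𝕜 k kp 0 = k := by
  simp [circlePoint]

theorem inner_circlePoint_circlePoint (hk : ‖k‖ = 1) (hkp : ‖kp‖ = 1) (hortho : ⟪k, kp⟫_𝕜 = 0)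
    (θ β : ℝ) :
    ⟪circlePoint 𝕜 k kp θ, circlePoint 𝕜 k kp β⟫_𝕜 = (Real.cos (β - θ) : 𝕜) := by
  have hkk : ⟪k, k⟫_𝕜 = 1 := by simp [inner_self_eq_norm_sq_to_K, hk]
  have hkpkp : ⟪kp, kp⟫_𝕜 = 1 := by simp [inner_self_eq_norm_sq_to_K, hkp]
  have hortho' : ⟪kp, k⟫_𝕜 = 0 := inner_eq_zero_symm.mp hortho
  simp only [circlePoint, inner_add_left, inner_add_right, inner_smul_left, inner_smul_right,
    RCLike.conj_ofReal, hkk, hkpkp, hortho, hortho', Real.cos_sub]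
  push_cast
  ring

theorem circlePoint_sub_two_inner_smul (hk : ‖k‖ = 1) (hkp : ‖kp‖ = 1)
    (hortho : ⟪k, kp⟫_𝕜 = 0) (θ β : ℝ) :
    circlePoint 𝕜 k kp β - (2 : 𝕜) • (⟪circlePoint 𝕜 k kp θ, circlePoint 𝕜 k kp β⟫_𝕜 •
        circlePoint 𝕜 k kp θ) = circlePoint 𝕜 k kp (2 * θ + Real.pi - β) := by
  rw [inner_circlePoint_circlePoint hk hkp hortho]
  obtain ⟨γ, rfl⟩ : ∃ γ, β = θ + γ := ⟨β - θ, by ring⟩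
  have hangle : 2 * θ + Real.pi - (θ + γ) = θ - γ + Real.pi := by ring
  rw [hangle, add_sub_cancel_left]
  unfold circlePoint
  rw [Real.cos_add_pi, Real.sin_add_pi]
  simp only [Real.cos_add, Real.sin_add, Real.cos_sub, Real.sin_sub, smul_add, smul_smul]
  push_cast
  module

end GroverRotation

open scoped ComplexInnerProductSpace

open GroverRotation in
/-- Grover rotation: one application of `Q = V_ψ ∘ V_k` rotates a state in the plane
spanned by the orthonormal pair `k, k⊥` by angle `2θ`, where
`ψ = cos θ • k + sin θ • k⊥`. -/
theorem grover_rotation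
    {H : Type*} [NormedAddCommGroup H] [InnerProductSpace ℂ H]
    (k kp : H) (hk : ‖k‖ = 1) (hkp : ‖kp‖ = 1) (hortho : ⟪k, kp⟫ = 0)
    (θ : ℝ) (ψ : H)
    (hψ : ψ = (Real.cos θ : ℂ) • k + (Real.sin θ : ℂ) • kp)
    (Pk Pψ Vk Vψ Q : H → H)
    (hPk : ∀ x, Pk x = ⟪k, x⟫ • k)
    (hPψ : ∀ x, Pψ x = ⟪ψ, x⟫ • ψ)
    (hVk : ∀ x, Vk x = x - (2 : ℂ) • Pk x)
    (hVψ : ∀ x, Vψ x = x - (2 : ℂ) • Pψ x)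
    (hQ : Q = Vψ ∘ Vk) (α : ℝ) :
    Q ((Real.cos α : ℂ) • k + (Real.sin α : ℂ) • kp)
      = (Real.cos (α + 2 * θ) : ℂ) • k + (Real.sin (α + 2 * θ) : ℂ) • kp := by
  let e : ℝ → H := circlePoint ℂ k kp
  have hk0 : k = e 0 := (circlePoint_zero).symm
  have hψθ : ψ = e θ := hψ
  have reflect (θ' β : ℝ) : e β - (2 : ℂ) • (⟪e θ', e β⟫ • e θ') = e (2 * θ' + Real.pi - β) :=
    circlePoint_sub_two_inner_smul hk hkp hortho θ' β
  have hVk_e : Vk (e α) = e (Real.pi - α) := by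
    rw [hVk, hPk, hk0, reflect, mul_zero, zero_add]
  have hVψ_e : Vψ (e (Real.pi - α)) = e (α + 2 * θ) := by
    rw [hVψ, hPψ, hψθ, reflect]
    congr 1; ring
  change Q (e α) = e (α + 2 * θ)
  rw [hQ, Function.comp_apply, hVk_e, hVψ_e]
end

section
/- Let H be a complex inner product space, let k and k⊥ be orthonormal vectors in H, let θ ∈ ℝ, and let ψ = cos θ • k + sin θ • k⊥. Let Q = V_ψ ∘ V_k be the Grover operator, where V_k = id − 2 P_k and V_ψ = id − 2 P_ψ. Then for every natural number m, the m-fold iterate satisfies Q^m ψ = cos((2m+1)θ) • k + sin((2m+1)θ) • k⊥. -/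
open scoped ComplexInnerProductSpace

/-! On the real plane spanned by orthonormal `k`, `k⊥`, the map `id − 2 P_v` for the unit vector
`v` at angle `β` sends the unit vector at angle `α` to the one at angle `2β + π − α`. Composing
the two such maps for `k` (angle `0`) and `ψ` (angle `θ`) is therefore the rotation by `2θ`, and
`ψ` is carried to the angle `θ + 2mθ` after `m` steps. -/

namespace Grover

variable {H : Type*} [NormedAddCommGroup H] [InnerProductSpace ℂ H]

noncomputable def circleVec (k kp : H) (α : ℝ) : H := (Real.cos α : ℂ) • k + (Real.sin α : ℂ) • kp

@[simp]
lemma circleVec_zero (k kp : H) : circleVec k kp 0 = k := by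
  simp [circleVec]

variable {k kp : H}

lemma inner_circleVec (hk : ‖k‖ = 1) (hkp : ‖kp‖ = 1) (hortho : ⟪k, kp⟫ = 0) (α β : ℝ) :
    ⟪circleVec k kp β, circleVec k kp α⟫ = (Real.cos (α - β) : ℂ) := by
  have hkk : ⟪k, k⟫ = (1 : ℂ) := by simp [inner_self_eq_norm_sq_to_K, hk]
  have hpp : ⟪kp, kp⟫ = (1 : ℂ) := by simp [inner_self_eq_norm_sq_to_K, hkp]
  have hpk : ⟪kp, k⟫ = 0 := by rw [← inner_conj_symm, hortho, map_zero]
  simp only [circleVec, inner_add_left, inner_add_right, inner_smul_left, inner_smul_right,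
    hkk, hpp, hpk, hortho, Complex.conj_ofReal, Real.cos_sub]
  push_cast
  ring

lemma circleVec_sub_two_smul_inner (hk : ‖k‖ = 1) (hkp : ‖kp‖ = 1) (hortho : ⟪k, kp⟫ = 0)
    (α β : ℝ) :
    circleVec k kp α - (2 : ℂ) • (⟪circleVec k kp β, circleVec k kp α⟫ • circleVec k kp β)
      = circleVec k kp (2 * β + Real.pi - α) := by
  rw [inner_circleVec hk hkp hortho]
  simp only [circleVec, smul_add, smul_smul, Real.cos_sub, Real.sin_sub, Real.cos_add_pi,
    Real.sin_add_pi, Real.cos_two_mul, Real.sin_two_mul]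
  have hpyth := Complex.sin_sq_add_cos_sq (β : ℂ)
  match_scalars
  · ring
  · linear_combination (-2 * Complex.sin α) * hpyth

end Grover

open Grover in
/-- `m` iterations of the Grover operator `Q = V_ψ ∘ V_k` applied to
`ψ = cos θ • k + sin θ • k⊥` yield `cos((2m+1)θ) • k + sin((2m+1)θ) • k⊥`. -/
theorem grover_iterate
    {H : Type*} [NormedAddCommGroup H] [InnerProductSpace ℂ H]
    (k kp : H) (hk : ‖k‖ = 1) (hkp : ‖kp‖ = 1) (hortho : ⟪k, kp⟫ = 0)
    (θ : ℝ) (ψ : H)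
    (hψ : ψ = (Real.cos θ : ℂ) • k + (Real.sin θ : ℂ) • kp)
    (Pk Pψ Vk Vψ Q : H → H)
    (hPk : ∀ x, Pk x = ⟪k, x⟫ • k)
    (hPψ : ∀ x, Pψ x = ⟪ψ, x⟫ • ψ)
    (hVk : ∀ x, Vk x = x - (2 : ℂ) • Pk x)
    (hVψ : ∀ x, Vψ x = x - (2 : ℂ) • Pψ x)
    (hQ : Q = Vψ ∘ Vk) (m : ℕ) :
    Q^[m] ψ = (Real.cos ((2 * m + 1) * θ) : ℂ) • k
      + (Real.sin ((2 * m + 1) * θ) : ℂ) • kp := by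
  have hψ_circle : ψ = circleVec k kp θ := hψ
  have hVk_circle (α : ℝ) : Vk (circleVec k kp α) = circleVec k kp (Real.pi - α) := by
    simpa [hVk, hPk] using circleVec_sub_two_smul_inner hk hkp hortho α 0
  have hVψ_circle (α : ℝ) : Vψ (circleVec k kp α) = circleVec k kp (2 * θ + Real.pi - α) := by
    rw [hVψ, hPψ, hψ_circle, circleVec_sub_two_smul_inner hk hkp hortho]
  have hQ_rotate : Function.Semiconj (circleVec k kp) (· + 2 * θ) Q := fun α => by
    rw [hQ, Function.comp_apply, hVk_circle, hVψ_circle]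
    congr 1
    ring
  calc Q^[m] ψ = circleVec k kp (θ + m • (2 * θ)) := by
        rw [hψ_circle, ← (hQ_rotate.iterate_right m).eq, add_right_iterate_apply]
    _ = circleVec k kp ((2 * m + 1) * θ) := by
        congr 1
        rw [nsmul_eq_mul]
        ring
end

section
/- Let θ be a real number with 0 < θ ≤ π/4 and set m = ⌊π/(4θ) − 1/2⌋ (the floor, a natural number). Then sin²((2m+1)θ) ≥ cos²(2θ). -/
/-!
The floor makes `(2m+1)θ` the largest odd multiple of `θ` not exceeding `π/2`, so it lies in
`(π/2 − 2θ, π/2]`. There `sin` is increasing, and `sin (π/2 − 2θ) = cos 2θ ≥ 0`.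
-/

open Real

theorem odd_mul_floor_mem_Ioc {α θ : ℝ} (hθ : 0 < θ) (hθα : θ ≤ α) :
    (2 * ⌊α / (2 * θ) - 1 / 2⌋₊ + 1) * θ ∈ Set.Ioc (α - 2 * θ) α := by
  set x := α / (2 * θ) - 1 / 2 with hx
  have hα : α = (2 * x + 1) * θ := by rw [hx]; field_simp; ring
  have hx0 : 0 ≤ x := by
    rw [hx, sub_nonneg, le_div_iff₀ (by positivity)]; linarith
  have hfloor_le : (⌊x⌋₊ : ℝ) ≤ x := Nat.floor_le hx0
  have hlt_floor : x < ⌊x⌋₊ + 1 := Nat.lt_floor_add_one x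
  constructor <;> rw [hα] <;> nlinarith

theorem cos_le_sin_of_pi_div_two_sub_le {β φ : ℝ} (hβ : β ≤ π) (hlow : π / 2 - β ≤ φ)
    (hup : φ ≤ π / 2) : cos β ≤ sin φ := by
  rw [← sin_pi_div_two_sub]
  exact strictMonoOn_sin.monotoneOn ⟨by linarith, by linarith⟩ ⟨by linarith, hup⟩ hlow

/-- Choosing `m = ⌊π/(4θ) − 1/2⌋` Grover iterations makes the success probability
`sin²((2m+1)θ)` at least `cos²(2θ)`. -/
theorem grover_optimal_iterations (θ : ℝ) (hθ : 0 < θ) (hθ' : θ ≤ Real.pi / 4)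
    (m : ℕ) (hm : m = ⌊Real.pi / (4 * θ) - 1 / 2⌋₊) :
    Real.sin ((2 * m + 1) * θ) ^ 2 ≥ Real.cos (2 * θ) ^ 2 := by
  have hπ : π / (4 * θ) = π / 2 / (2 * θ) := by rw [div_div]; ring_nf
  obtain ⟨hlow, hup⟩ := odd_mul_floor_mem_Ioc (α := π / 2) hθ (by linarith [pi_pos])
  rw [← hπ, ← hm] at hlow hup
  have hcos_nonneg : 0 ≤ cos (2 * θ) := cos_nonneg_of_mem_Icc ⟨by linarith, by linarith⟩
  exact pow_le_pow_left₀ hcos_nonneg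
    (cos_le_sin_of_pi_div_two_sub_le (by linarith) (by linarith) hup) 2
end

section
/- Let θ be a real number with 0 < θ < π/2 and let M be a positive natural number satisfying M ≥ 1/sin(2θ). Then the average success probability satisfies (1/M) · ∑_{j=0}^{M−1} sin²((2j+1)θ) ≥ 1/4. -/
/-!
Writing `sin² y = (1 - cos 2y) / 2` and telescoping the cosine sum gives the closed form
`4 sin 2θ · ∑ sin² ((2j+1)θ) = 2M sin 2θ - sin 4Mθ`. Since `sin 4Mθ ≤ 1 ≤ M sin 2θ`, the right
side is at least `M sin 2θ`, i.e. the sum is at least `M / 4`.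
-/

open Finset Real

/-- The sum telescopes, since `2 sin x cos ((2j+1)x) = sin ((2j+2)x) - sin (2jx)`. -/
theorem two_mul_sin_mul_sum_range_cos_odd_mul (x : ℝ) (M : ℕ) :
    2 * sin x * ∑ j ∈ range M, cos ((2 * j + 1) * x) = sin (2 * M * x) := by
  have h_step (j : ℕ) :
      2 * sin x * cos ((2 * j + 1) * x) = sin (2 * ↑(j + 1) * x) - sin (2 * ↑j * x) := by
    have h₁ : 2 * ((j + 1 : ℕ) : ℝ) * x = (2 * j + 1) * x + x := by push_cast; ring
    have h₂ : 2 * (j : ℝ) * x = (2 * j + 1) * x - x := by ring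
    rw [h₁, h₂, sin_add, sin_sub]
    ring
  rw [mul_sum, sum_congr rfl fun j _ => h_step j, sum_range_sub (fun j : ℕ => sin (2 * j * x))]
  simp

theorem four_mul_sin_two_mul_mul_sum_range_sin_sq_odd_mul (θ : ℝ) (M : ℕ) :
    4 * sin (2 * θ) * ∑ j ∈ range M, sin ((2 * j + 1) * θ) ^ 2
      = 2 * M * sin (2 * θ) - sin (4 * M * θ) := by
  have h_sq (j : ℕ) : sin ((2 * j + 1) * θ) ^ 2 = (1 - cos ((2 * j + 1) * (2 * θ))) / 2 := by
    rw [sin_sq_eq_half_sub]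
    ring_nf
  have h_cos := two_mul_sin_mul_sum_range_cos_odd_mul (2 * θ) M
  rw [sum_congr rfl fun j _ => h_sq j, ← sum_div, sum_sub_distrib, sum_const, card_range,
    nsmul_eq_mul]
  rw [show 4 * (M : ℝ) * θ = 2 * M * (2 * θ) by ring, ← h_cos]
  ring

theorem average_success_probability_ge_quarter_general (θ : ℝ) (hθ : 0 < θ) (hθ' : θ < Real.pi / 2)
    (M : ℕ) (hM' : (M : ℝ) ≥ 1 / Real.sin (2 * θ)) :
    (1 / (M : ℝ)) * ∑ j ∈ Finset.range M, Real.sin ((2 * j + 1) * θ) ^ 2 ≥ 1 / 4 := by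
  have hs : 0 < sin (2 * θ) := sin_pos_of_pos_of_lt_pi (by linarith) (by linarith)
  have hMs : 1 ≤ M * sin (2 * θ) := (div_le_iff₀ hs).mp hM'
  have hM : (0 : ℝ) < M := pos_of_mul_pos_left (one_pos.trans_le hMs) hs.le
  have h_sum := four_mul_sin_two_mul_mul_sum_range_sin_sq_odd_mul θ M
  have h_bound : M / 4 ≤ ∑ j ∈ range M, sin ((2 * j + 1) * θ) ^ 2 := by
    refine le_of_mul_le_mul_left ?_ (by positivity : 0 < 4 * sin (2 * θ))
    nlinarith [sin_le_one (4 * M * θ)]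
  rw [ge_iff_le, one_div_mul_eq_div, le_div_iff₀ hM]
  linarith

/-- If `M ≥ 1/sin(2θ)`, the average success probability of amplitude amplification
with a uniformly random number of Grover iterations `j ∈ {0, …, M−1}` is at least `1/4`. -/
theorem average_success_probability_ge_quarter (θ : ℝ) (hθ : 0 < θ) (hθ' : θ < Real.pi / 2)
    (M : ℕ) (hM : 0 < M) (hM' : (M : ℝ) ≥ 1 / Real.sin (2 * θ)) :
    (1 / (M : ℝ)) * ∑ j ∈ Finset.range M, Real.sin ((2 * j + 1) * θ) ^ 2 ≥ 1 / 4 :=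
  average_success_probability_ge_quarter_general θ hθ hθ' M hM'
end

section
/- Let H be a complex Hilbert space, let ψ and φ be unit vectors in H, and let E : H → H be a continuous linear self-adjoint operator satisfying 0 ≤ re⟨x, E x⟩ ≤ ‖x‖² for all x ∈ H. Then re⟨ψ, E ψ⟩ − re⟨φ, E φ⟩ ≤ √(1 − |⟨ψ, φ⟩|²). -/
/-!
Put `u = ψ + φ`, `v = ψ - φ` and let `b` be the bias. For any symmetric `T`,
`re ⟪u, T v⟫ = re ⟪ψ, T ψ⟫ - re ⟪φ, T φ⟫`; with `T = E` this is `b`, and with `T = 1 - E` it is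
`-b` because `‖ψ‖ = ‖φ‖`. Cauchy–Schwarz for the positive forms of `E` and `1 - E` bounds `b²` by
`P Q` and by `P' Q'`, where `P + P' = ‖u‖²` and `Q + Q' = ‖v‖²`, hence
`2 |b| ≤ √(P Q) + √(P' Q') ≤ ‖u‖ ‖v‖ = 2 √(1 - (re ⟪ψ, φ⟫)²)`.
Multiplying `φ` by a phase changes neither the bias nor `|⟪ψ, φ⟫|` and makes `⟪ψ, φ⟫` real.
-/

open scoped ComplexInnerProductSpace

theorem four_mul_sq_le_add_mul_add {b p q p' q' : ℝ} (hp : 0 ≤ p) (hq : 0 ≤ q) (hp' : 0 ≤ p')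
    (hq' : 0 ≤ q') (h : b ^ 2 ≤ p * q) (h' : b ^ 2 ≤ p' * q') :
    4 * b ^ 2 ≤ (p + p') * (q + q') := by
  nlinarith [sq_nonneg (p * q' - p' * q), mul_nonneg hp hq', mul_nonneg hp' hq]

theorem Complex.exists_norm_eq_one_mul_eq_norm (c : ℂ) : ∃ z : ℂ, ‖z‖ = 1 ∧ z * c = ‖c‖ := by
  refine ⟨exp (↑(-c.arg) * I), norm_exp_ofReal_mul_I _, ?_⟩
  conv_lhs => rw [← norm_mul_exp_arg_mul_I c]
  rw [mul_left_comm, ← exp_add]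
  simp

section

variable {H : Type*} [NormedAddCommGroup H] [InnerProductSpace ℂ H]

theorem inner_smul_map_smul_of_norm_eq_one (T : H →L[ℂ] H) {z : ℂ} (hz : ‖z‖ = 1) (x : H) :
    ⟪z • x, T (z • x)⟫ = ⟪x, T x⟫ := by
  rw [map_smul, inner_smul_left, inner_smul_right, ← mul_assoc, Complex.conj_mul', hz]
  simp

namespace LinearMap.IsSymmetric

variable {T : H →ₗ[ℂ] H}

theorem re_inner_map_comm (hT : T.IsSymmetric) (x y : H) :
    (⟪x, T y⟫).re = (⟪y, T x⟫).re := by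
  rw [← hT x y]
  exact inner_re_symm (𝕜 := ℂ) _ _

theorem re_inner_add_map_sub (hT : T.IsSymmetric) (x y : H) :
    (⟪x + y, T (x - y)⟫).re = (⟪x, T x⟫).re - (⟪y, T y⟫).re := by
  simp only [map_sub, inner_add_left, inner_sub_right, Complex.add_re, Complex.sub_re,
    hT.re_inner_map_comm y x]
  ring

end LinearMap.IsSymmetric

namespace ContinuousLinearMap

theorem isPositive_of_re_inner_map_nonneg {T : H →L[ℂ] H} (hT : (T : H →ₗ[ℂ] H).IsSymmetric)
    (h : ∀ x, 0 ≤ (⟪x, T x⟫).re) : T.IsPositive :=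
  ⟨hT, fun x => by
    rw [reApplyInnerSelf_apply, inner_re_symm]
    exact h x⟩

theorem IsPositive.re_inner_map_sq_le {T : H →L[ℂ] H} (hT : T.IsPositive) (x y : H) :
    (⟪x, T y⟫).re ^ 2 ≤ (⟪x, T x⟫).re * (⟪y, T y⟫).re := by
  let B : LinearMap.BilinForm ℝ H := LinearMap.mk₂ ℝ (fun x y => (⟪x, T y⟫).re)
    (fun _ _ _ => by simp) (fun _ _ _ => by simp) (fun _ _ _ => by simp) (fun _ _ _ => by simp)
  exact B.apply_sq_le_of_symm hT.re_inner_nonneg_right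
    ⟨fun x y => hT.isSymmetric.re_inner_map_comm x y⟩ x y

theorem re_inner_one_sub_apply_self (E : H →L[ℂ] H) (x : H) :
    (⟪x, (1 - E) x⟫).re = ‖x‖ ^ 2 - (⟪x, E x⟫).re := by
  simp [← Complex.ofReal_pow]

variable {E : H →L[ℂ] H}

theorem sq_re_inner_map_sub_le (h0 : 0 ≤ E) (h1 : E ≤ 1) {x y : H} (hxy : ‖x‖ = ‖y‖) :
    4 * ((⟪x, E x⟫).re - (⟪y, E y⟫).re) ^ 2 ≤ ‖x + y‖ ^ 2 * ‖x - y‖ ^ 2 := by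
  have hE : E.IsPositive := (nonneg_iff_isPositive E).1 h0
  have hF : (1 - E).IsPositive := h1
  set b := (⟪x, E x⟫).re - (⟪y, E y⟫).re
  have hbE : (⟪x + y, E (x - y)⟫).re = b := hE.isSymmetric.re_inner_add_map_sub x y
  have hbF : (⟪x + y, (1 - E) (x - y)⟫).re = -b := by
    have h : (⟪x + y, (1 - E) (x - y)⟫).re = (⟪x, (1 - E) x⟫).re - (⟪y, (1 - E) y⟫).re :=
      hF.isSymmetric.re_inner_add_map_sub x y
    rw [h, re_inner_one_sub_apply_self, re_inner_one_sub_apply_self, hxy]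
    ring
  have hE2 := hE.re_inner_map_sq_le (x + y) (x - y)
  have hF2 := hF.re_inner_map_sq_le (x + y) (x - y)
  rw [hbE] at hE2
  rw [hbF, neg_sq] at hF2
  calc 4 * b ^ 2
      ≤ ((⟪x + y, E (x + y)⟫).re + (⟪x + y, (1 - E) (x + y)⟫).re) *
          ((⟪x - y, E (x - y)⟫).re + (⟪x - y, (1 - E) (x - y)⟫).re) :=
        four_mul_sq_le_add_mul_add (hE.re_inner_nonneg_right _) (hE.re_inner_nonneg_right _)
          (hF.re_inner_nonneg_right _) (hF.re_inner_nonneg_right _) hE2 hF2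
    _ = ‖x + y‖ ^ 2 * ‖x - y‖ ^ 2 := by
        simp only [re_inner_one_sub_apply_self, add_sub_cancel]

theorem re_inner_map_sub_le_sqrt (h0 : 0 ≤ E) (h1 : E ≤ 1) {x y : H}
    (hx : ‖x‖ = 1) (hy : ‖y‖ = 1) :
    (⟪x, E x⟫).re - (⟪y, E y⟫).re ≤ √(1 - (⟪x, y⟫).re ^ 2) := by
  have h := sq_re_inner_map_sub_le h0 h1 (hx.trans hy.symm)
  rw [norm_add_sq (𝕜 := ℂ), norm_sub_sq (𝕜 := ℂ), hx, hy, RCLike.re_to_complex] at h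
  exact (le_abs_self _).trans (Real.abs_le_sqrt (by linarith))

end ContinuousLinearMap

end

/-- Helstrom-type bound: for any measurement effect `0 ≤ E ≤ 1`, the bias at
distinguishing the unit vectors `ψ` and `φ` is at most `√(1 − |⟨ψ, φ⟩|²)`. -/
theorem helstrom_bias_bound
    {H : Type*} [NormedAddCommGroup H] [InnerProductSpace ℂ H] [CompleteSpace H]
    (ψ φ : H) (hψ : ‖ψ‖ = 1) (hφ : ‖φ‖ = 1)
    (E : H →L[ℂ] H) (hE : IsSelfAdjoint E)
    (hE0 : ∀ x : H, 0 ≤ (⟪x, E x⟫).re)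
    (hE1 : ∀ x : H, (⟪x, E x⟫).re ≤ ‖x‖ ^ 2) :
    (⟪ψ, E ψ⟫).re - (⟪φ, E φ⟫).re ≤ Real.sqrt (1 - ‖⟪ψ, φ⟫‖ ^ 2) := by
  have h0 : 0 ≤ E := (ContinuousLinearMap.nonneg_iff_isPositive E).2 <|
    ContinuousLinearMap.isPositive_of_re_inner_map_nonneg hE.isSymmetric hE0
  have h1 : E ≤ 1 := ContinuousLinearMap.isPositive_of_re_inner_map_nonneg
    ((IsSelfAdjoint.one _).sub hE).isSymmetric
    fun x => by linarith [ContinuousLinearMap.re_inner_one_sub_apply_self E x, hE1 x]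
  obtain ⟨z, hz, hzc⟩ := Complex.exists_norm_eq_one_mul_eq_norm ⟪ψ, φ⟫
  have h := ContinuousLinearMap.re_inner_map_sub_le_sqrt h0 h1 hψ (y := z • φ)
    (by rw [norm_smul, hz, hφ, one_mul])
  rwa [inner_smul_map_smul_of_norm_eq_one E hz, inner_smul_right, hzc, Complex.ofReal_re] at h
end

section
/- Let H be a complex Hilbert space, let ψ and φ be unit vectors in H, and let E : H → H be a continuous linear self-adjoint operator satisfying 0 ≤ re⟨x, E x⟩ ≤ ‖x‖² for all x ∈ H. Then the error probability of the discrimination strategy defined by E satisfies (1/2)·((1 − re⟨ψ, E ψ⟩) + re⟨φ, E φ⟩) ≥ (1/2)·(1 − √(1 − |⟨ψ, φ⟩|²)). -/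
/-!
Split `⟪ψ, φ⟫ = ⟪ψ, E φ⟫ + ⟪ψ, (1 - E) φ⟫` and apply Cauchy–Schwarz to the semi-inner products
`(x, y) ↦ ⟪x, T y⟫` of the positive operators `T = E` and `T = 1 - E`. With `a = re ⟪ψ, E ψ⟫` and
`b = re ⟪φ, E φ⟫` this gives `‖⟪ψ, φ⟫‖ ≤ √(ab) + √((1 - a)(1 - b))`, and by AM–GM the square of
the right-hand side is at most `1 - (a - b)²`. Hence `a - b ≤ √(1 - ‖⟪ψ, φ⟫‖²)`.
-/

open scoped ComplexInnerProductSpace InnerProductSpace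
open RCLike

theorem sq_add_le_one_sub_sq_sub {a b x y : ℝ} (ha0 : 0 ≤ a) (ha1 : a ≤ 1) (hb0 : 0 ≤ b)
    (hb1 : b ≤ 1) (hxab : x ^ 2 ≤ a * b) (hyab : y ^ 2 ≤ (1 - a) * (1 - b)) :
    (x + y) ^ 2 ≤ 1 - (a - b) ^ 2 := by
  have hp : 0 ≤ a * (1 - a) := by nlinarith
  have hq : 0 ≤ b * (1 - b) := by nlinarith
  have hxy : (x * y) ^ 2 ≤ (a * (1 - a)) * (b * (1 - b)) :=
    calc (x * y) ^ 2 = x ^ 2 * y ^ 2 := mul_pow x y 2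
      _ ≤ (a * b) * ((1 - a) * (1 - b)) := by gcongr
      _ = (a * (1 - a)) * (b * (1 - b)) := by ring
  have hamgm : 2 * (x * y) ≤ a * (1 - a) + b * (1 - b) := by
    nlinarith [sq_nonneg (a * (1 - a) - b * (1 - b))]
  nlinarith

namespace LinearMap

variable {𝕜 E : Type*} [RCLike 𝕜] [NormedAddCommGroup E] [InnerProductSpace 𝕜 E]

theorem IsPositive.norm_inner_map_sq_le {T : E →ₗ[𝕜] E} (hT : T.IsPositive) (x y : E) :
    ‖⟪x, T y⟫_𝕜‖ ^ 2 ≤ re ⟪x, T x⟫_𝕜 * re ⟪y, T y⟫_𝕜 := by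
  let c : PreInnerProductSpace.Core 𝕜 E :=
    { inner a b := ⟪a, T b⟫_𝕜
      conj_inner_symm a b := by rw [inner_conj_symm, hT.isSymmetric]
      re_inner_nonneg := hT.re_inner_nonneg_right
      add_left a b z := inner_add_left a b (T z)
      smul_left a b r := inner_smul_left a (T b) r }
  have hcs := @InnerProductSpace.Core.inner_mul_inner_self_le 𝕜 E _ _ _ c x y
  change ‖⟪x, T y⟫_𝕜‖ * ‖⟪y, T x⟫_𝕜‖ ≤ re ⟪x, T x⟫_𝕜 * re ⟪y, T y⟫_𝕜 at hcs
  rwa [← hT.isSymmetric y x, norm_inner_symm (T y) x, ← sq] at hcs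

end LinearMap

namespace ContinuousLinearMap

variable {𝕜 E : Type*} [RCLike 𝕜] [NormedAddCommGroup E] [InnerProductSpace 𝕜 E]

theorem IsPositive.norm_inner_map_sq_le {T : E →L[𝕜] E} (hT : T.IsPositive) (x y : E) :
    ‖⟪x, T y⟫_𝕜‖ ^ 2 ≤ re ⟪x, T x⟫_𝕜 * re ⟪y, T y⟫_𝕜 :=
  hT.toLinearMap.norm_inner_map_sq_le x y

theorem nonneg_of_re_inner_map_nonneg [CompleteSpace E] {T : E →L[𝕜] E}
    (hT : IsSelfAdjoint T) (h : ∀ x, 0 ≤ re ⟪x, T x⟫_𝕜) : 0 ≤ T :=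
  (nonneg_iff_isPositive T).mpr <|
    isPositive_def'.mpr ⟨hT, fun x => by simpa only [reApplyInnerSelf, inner_re_symm] using h x⟩

theorem le_one_of_re_inner_map_le_norm_sq [CompleteSpace E] {T : E →L[𝕜] E}
    (hT : IsSelfAdjoint T) (h : ∀ x, re ⟪x, T x⟫_𝕜 ≤ ‖x‖ ^ 2) : T ≤ 1 := by
  refine (le_def T 1).mpr <| (nonneg_iff_isPositive _).mp <|
    nonneg_of_re_inner_map_nonneg ((IsSelfAdjoint.one _).sub hT) fun x => ?_
  simpa [inner_sub_right, inner_self_eq_norm_sq_to_K] using h x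

theorem norm_inner_sq_le_one_sub_sq_sub {T : E →L[𝕜] E} (h0 : 0 ≤ T) (h1 : T ≤ 1)
    {ψ φ : E} (hψ : ‖ψ‖ = 1) (hφ : ‖φ‖ = 1) :
    ‖⟪ψ, φ⟫_𝕜‖ ^ 2 ≤ 1 - (re ⟪ψ, T ψ⟫_𝕜 - re ⟪φ, T φ⟫_𝕜) ^ 2 := by
  have hT : T.IsPositive := (nonneg_iff_isPositive T).mp h0
  have hS : (1 - T).IsPositive := (le_def T 1).mp h1
  have hS_re (x : E) (hx : ‖x‖ = 1) : re ⟪x, (1 - T) x⟫_𝕜 = 1 - re ⟪x, T x⟫_𝕜 := by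
    simp [inner_sub_right, inner_self_eq_norm_sq_to_K, hx]
  have hsplit : ⟪ψ, φ⟫_𝕜 = ⟪ψ, T φ⟫_𝕜 + ⟪ψ, (1 - T) φ⟫_𝕜 := by
    rw [← inner_add_right, sub_apply, add_sub_cancel, one_apply_eq_self]
  have hcsS := hS.norm_inner_map_sq_le ψ φ
  rw [hS_re ψ hψ, hS_re φ hφ] at hcsS
  calc ‖⟪ψ, φ⟫_𝕜‖ ^ 2 ≤ (‖⟪ψ, T φ⟫_𝕜‖ + ‖⟪ψ, (1 - T) φ⟫_𝕜‖) ^ 2 := by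
        gcongr
        exact hsplit ▸ norm_add_le _ _
    _ ≤ 1 - (re ⟪ψ, T ψ⟫_𝕜 - re ⟪φ, T φ⟫_𝕜) ^ 2 :=
        sq_add_le_one_sub_sq_sub (hT.re_inner_nonneg_right ψ)
          (by linarith [hS.re_inner_nonneg_right ψ, hS_re ψ hψ]) (hT.re_inner_nonneg_right φ)
          (by linarith [hS.re_inner_nonneg_right φ, hS_re φ hφ])
          (hT.norm_inner_map_sq_le ψ φ) hcsS

end ContinuousLinearMap

open ContinuousLinearMap in
/-- Helstrom bound: the error probability of any two-outcome measurement `0 ≤ E ≤ 1`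
at discriminating the equally likely pure states `ψ` and `φ` is at least
`(1/2)(1 − √(1 − |⟨ψ, φ⟩|²))`. -/
theorem helstrom_error_bound
    {H : Type*} [NormedAddCommGroup H] [InnerProductSpace ℂ H] [CompleteSpace H]
    (ψ φ : H) (hψ : ‖ψ‖ = 1) (hφ : ‖φ‖ = 1)
    (E : H →L[ℂ] H) (hE : IsSelfAdjoint E)
    (hE0 : ∀ x : H, 0 ≤ (⟪x, E x⟫).re)
    (hE1 : ∀ x : H, (⟪x, E x⟫).re ≤ ‖x‖ ^ 2) :
    (1 / 2 : ℝ) * ((1 - (⟪ψ, E ψ⟫).re) + (⟪φ, E φ⟫).re)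
      ≥ (1 / 2 : ℝ) * (1 - Real.sqrt (1 - ‖⟪ψ, φ⟫‖ ^ 2)) := by
  have hgap := norm_inner_sq_le_one_sub_sq_sub (nonneg_of_re_inner_map_nonneg hE hE0)
    (le_one_of_re_inner_map_le_norm_sq hE hE1) hψ hφ
  rw [re_to_complex, re_to_complex] at hgap
  have hsqrt := Real.le_sqrt_of_sq_le (show ((⟪ψ, E ψ⟫).re - (⟪φ, E φ⟫).re) ^ 2
    ≤ 1 - ‖⟪ψ, φ⟫‖ ^ 2 by linarith)
  linarith
end

section
/- Let H be a complex Hilbert space and let ψ and φ be unit vectors in H. Then there exists an orthogonal projection E : H → H such that (1/2)·((1 − re⟨ψ, E ψ⟩) + re⟨φ, E φ⟩) = (1/2)·(1 − √(1 − |⟨ψ, φ⟩|²)). -/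
/-!
The optimal measurement projects onto an eigenvector of `|ψ⟩⟨ψ| - |φ⟩⟨φ|` for its positive
eigenvalue `t = √(1 - |⟨ψ, φ⟩|²)`. Such an eigenvector is `v = (1 + t) ψ - ⟨φ, ψ⟩ φ`: one computes
`⟨v, ψ⟩ = t (1 + t)`, `⟨v, φ⟩ = t ⟨ψ, φ⟩` and `‖v‖² = 2 t² (1 + t)`, hence
`|⟨v, ψ⟩|² - |⟨v, φ⟩|² = t ‖v‖²`. Since the projection `E` onto `span {v}` satisfies
`⟨x, E x⟩ = |⟨v, x⟩|² / ‖v‖²`, this gives `⟨ψ, E ψ⟩ - ⟨φ, E φ⟩ = t`. When `t = 0` the vector `v`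
vanishes, `E = 0`, and the identity still holds.
-/

open scoped ComplexInnerProductSpace InnerProductSpace
open RCLike

section

variable {𝕜 E : Type*} [RCLike 𝕜] [NormedAddCommGroup E] [InnerProductSpace 𝕜 E]

theorem re_inner_starProjection_singleton (v x : E) :
    re ⟪x, (𝕜 ∙ v).starProjection x⟫_𝕜 = ‖⟪v, x⟫_𝕜‖ ^ 2 / ‖v‖ ^ 2 := by
  rw [Submodule.starProjection_singleton, inner_smul_right, ← inner_conj_symm x v, mul_comm,
    ← mul_div_assoc, RCLike.conj_mul, ← ofReal_pow, ← ofReal_div, ofReal_re]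

variable (𝕜) in
noncomputable def helstromVector (ψ φ : E) (t : ℝ) : E :=
  ((1 + t : ℝ) : 𝕜) • ψ - ⟪φ, ψ⟫_𝕜 • φ

variable {ψ φ : E} {t : ℝ}

theorem inner_helstromVector_fst (hψ : ‖ψ‖ = 1) (ht : t ^ 2 = 1 - ‖⟪ψ, φ⟫_𝕜‖ ^ 2) :
    ⟪helstromVector 𝕜 ψ φ t, ψ⟫_𝕜 = ((t * (1 + t) : ℝ) : 𝕜) := by
  have hs : (‖⟪ψ, φ⟫_𝕜‖ : 𝕜) ^ 2 = 1 - (t : 𝕜) ^ 2 := by exact_mod_cast (by linarith)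
  simp only [helstromVector, inner_sub_left, inner_smul_left, inner_conj_symm, conj_ofReal,
    inner_self_eq_norm_sq_to_K, hψ]
  rw [← inner_conj_symm φ ψ, mul_conj, hs]
  push_cast
  ring

theorem inner_helstromVector_snd (hφ : ‖φ‖ = 1) :
    ⟪helstromVector 𝕜 ψ φ t, φ⟫_𝕜 = t * ⟪ψ, φ⟫_𝕜 := by
  simp only [helstromVector, inner_sub_left, inner_smul_left, inner_conj_symm, conj_ofReal,
    inner_self_eq_norm_sq_to_K, hφ]
  push_cast
  ring

theorem norm_helstromVector_sq (hψ : ‖ψ‖ = 1) (hφ : ‖φ‖ = 1)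
    (ht : t ^ 2 = 1 - ‖⟪ψ, φ⟫_𝕜‖ ^ 2) :
    ‖helstromVector 𝕜 ψ φ t‖ ^ 2 = 2 * t ^ 2 * (1 + t) := by
  have hs : (‖⟪ψ, φ⟫_𝕜‖ : 𝕜) ^ 2 = 1 - (t : 𝕜) ^ 2 := by exact_mod_cast (by linarith)
  rw [← ofReal_inj (K := 𝕜), ofReal_pow, ← inner_self_eq_norm_sq_to_K]
  nth_rw 2 [helstromVector]
  rw [inner_sub_right, inner_smul_right, inner_smul_right, inner_helstromVector_fst hψ ht,
    inner_helstromVector_snd hφ, ← inner_conj_symm φ ψ, mul_left_comm, RCLike.conj_mul, hs]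
  push_cast
  ring

theorem norm_inner_helstromVector_fst_sq_sub_snd_sq (hψ : ‖ψ‖ = 1) (hφ : ‖φ‖ = 1)
    (ht : t ^ 2 = 1 - ‖⟪ψ, φ⟫_𝕜‖ ^ 2) :
    ‖⟪helstromVector 𝕜 ψ φ t, ψ⟫_𝕜‖ ^ 2 - ‖⟪helstromVector 𝕜 ψ φ t, φ⟫_𝕜‖ ^ 2 =
      t * ‖helstromVector 𝕜 ψ φ t‖ ^ 2 := by
  rw [inner_helstromVector_fst hψ ht, inner_helstromVector_snd hφ,
    norm_helstromVector_sq hψ hφ ht, norm_ofReal, norm_mul, norm_ofReal, mul_pow, sq_abs, sq_abs]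
  linear_combination (-t ^ 2) * ht

theorem re_inner_starProjection_helstromVector_sub (hψ : ‖ψ‖ = 1) (hφ : ‖φ‖ = 1)
    (ht₀ : 0 ≤ t) (ht : t ^ 2 = 1 - ‖⟪ψ, φ⟫_𝕜‖ ^ 2) :
    re ⟪ψ, (𝕜 ∙ helstromVector 𝕜 ψ φ t).starProjection ψ⟫_𝕜 -
      re ⟪φ, (𝕜 ∙ helstromVector 𝕜 ψ φ t).starProjection φ⟫_𝕜 = t := by
  rw [re_inner_starProjection_singleton, re_inner_starProjection_singleton, ← sub_div,
    norm_inner_helstromVector_fst_sq_sub_snd_sq hψ hφ ht]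
  rcases ht₀.eq_or_lt with rfl | ht_pos
  · simp
  · rw [mul_div_cancel_right₀ _ (by rw [norm_helstromVector_sq hψ hφ ht]; positivity)]

end

/-- The Helstrom bound is achieved: there is an orthogonal projection (a self-adjoint
idempotent) `E` whose discrimination error probability for the equally likely pure
states `ψ` and `φ` equals `(1/2)(1 − √(1 − |⟨ψ, φ⟩|²))`. -/
theorem helstrom_measurement_exists
    {H : Type*} [NormedAddCommGroup H] [InnerProductSpace ℂ H] [CompleteSpace H]
    (ψ φ : H) (hψ : ‖ψ‖ = 1) (hφ : ‖φ‖ = 1) :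
    ∃ E : H →L[ℂ] H, IsSelfAdjoint E ∧ E ∘L E = E ∧
      (1 / 2 : ℝ) * ((1 - (⟪ψ, E ψ⟫).re) + (⟪φ, E φ⟫).re)
        = (1 / 2 : ℝ) * (1 - Real.sqrt (1 - ‖⟪ψ, φ⟫‖ ^ 2)) := by
  set t := Real.sqrt (1 - ‖⟪ψ, φ⟫‖ ^ 2)
  have hs : ‖⟪ψ, φ⟫‖ ≤ 1 := by simpa [hψ, hφ] using norm_inner_le_norm (𝕜 := ℂ) ψ φ
  have ht : t ^ 2 = 1 - ‖⟪ψ, φ⟫‖ ^ 2 := Real.sq_sqrt (by nlinarith [norm_nonneg ⟪ψ, φ⟫])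
  let K := ℂ ∙ helstromVector ℂ ψ φ t
  have hdiff : (⟪ψ, K.starProjection ψ⟫).re - (⟪φ, K.starProjection φ⟫).re = t :=
    re_inner_starProjection_helstromVector_sub hψ hφ (Real.sqrt_nonneg _) ht
  refine ⟨K.starProjection, isSelfAdjoint_starProjection K, K.isIdempotentElem_starProjection.eq,
    ?_⟩
  linarith
end

section
/- Let d be a positive natural number, let p : Fin d → ℝ be a probability distribution (p j ≥ 0 for all j and ∑_j p j = 1), and let k_max be an index at which p attains its maximum. Then ∑_{j ≠ k_max} p j / √(1 − p j) ≤ √2 · (1 − p k_max). -/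
/-!
Every non-maximal probability `p j` satisfies `p j + p k_max ≤ 1` and `p j ≤ p k_max`, hence
`p j ≤ 1/2` and `1/√(1 - p j) ≤ √2`. Bounding each term by `√2 · p j` and summing over
`j ≠ k_max` gives `√2 · (1 - p k_max)`.
-/

open Finset

lemma div_sqrt_one_sub_le_sqrt_two_mul {x : ℝ} (hx0 : 0 ≤ x) (hx : x ≤ 1 / 2) :
    x / √(1 - x) ≤ √2 * x := by
  have hsqrt_half : √(1 / 2) = 1 / √2 := by
    rw [Real.sqrt_div' _ zero_le_two, Real.sqrt_one]
  calc x / √(1 - x) ≤ x / √(1 / 2) :=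
        div_le_div_of_nonneg_left hx0 (by positivity) (Real.sqrt_le_sqrt (by linarith))
    _ = √2 * x := by rw [hsqrt_half]; field_simp

section ProbabilityVector

variable {ι : Type*} [Fintype ι] [DecidableEq ι] {p : ι → ℝ}

lemma add_le_one_of_ne (hp0 : ∀ j, 0 ≤ p j) (hp1 : ∑ j, p j = 1) {i j : ι} (hij : i ≠ j) :
    p i + p j ≤ 1 := by
  rw [← hp1, ← sum_pair hij]
  exact sum_le_sum_of_subset_of_nonneg (subset_univ _) fun k _ _ => hp0 k

lemma le_half_of_ne_of_isMax (hp0 : ∀ j, 0 ≤ p j) (hp1 : ∑ j, p j = 1) {k : ι}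
    (hmax : ∀ j, p j ≤ p k) {j : ι} (hjk : j ≠ k) : p j ≤ 1 / 2 := by
  linarith [add_le_one_of_ne hp0 hp1 hjk, hmax j]

end ProbabilityVector

theorem nonmax_oracle_calls_bound_general
    (d : ℕ) (p : Fin d → ℝ)
    (hp0 : ∀ j, 0 ≤ p j) (hp1 : ∑ j : Fin d, p j = 1)
    (kmax : Fin d) (hmax : ∀ j, p j ≤ p kmax) :
    ∑ j ∈ Finset.univ.erase kmax, p j / Real.sqrt (1 - p j)
      ≤ Real.sqrt 2 * (1 - p kmax) := by
  calc ∑ j ∈ univ.erase kmax, p j / √(1 - p j)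
      ≤ ∑ j ∈ univ.erase kmax, √2 * p j :=
        sum_le_sum fun j hj => div_sqrt_one_sub_le_sqrt_two_mul (hp0 j)
          (le_half_of_ne_of_isMax hp0 hp1 hmax (ne_of_mem_erase hj))
    _ = √2 * (1 - p kmax) := by rw [← mul_sum, sum_erase_eq_sub (mem_univ kmax), hp1]

/-- Non-maximal contribution to the expected oracle-call count of amplitude-amplified
coherence detection: `∑_{j ≠ k_max} p j / √(1 − p j) ≤ √2 · (1 − p k_max)`. -/
theorem nonmax_oracle_calls_bound
    (d : ℕ) (hd : 0 < d) (p : Fin d → ℝ)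
    (hp0 : ∀ j, 0 ≤ p j) (hp1 : ∑ j : Fin d, p j = 1)
    (kmax : Fin d) (hmax : ∀ j, p j ≤ p kmax) :
    ∑ j ∈ Finset.univ.erase kmax, p j / Real.sqrt (1 - p j)
      ≤ Real.sqrt 2 * (1 - p kmax) :=
  nonmax_oracle_calls_bound_general d p hp0 hp1 kmax hmax
end

section
/- Let H be a complex inner product space and let ψ and φ be unit vectors in H with |⟨ψ, φ⟩| < 1. Then the linear operator P_ψ − P_φ has both √(1 − |⟨ψ, φ⟩|²) and −√(1 − |⟨ψ, φ⟩|²) as eigenvalues. -/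
open scoped ComplexInnerProductSpace

/-!
Writing `c = ⟪ψ, φ⟫` and `μ = √(1 - ‖c‖²)`, the vector `v = (μ + 1) ψ - c̄ φ` satisfies
`⟪ψ, v⟫ = μ (μ + 1)` and `⟪φ, v⟫ = μ c̄`, so `(P_ψ - P_φ) v = μ v`, and `v ≠ 0` because `μ > 0`.
Exchanging `ψ` and `φ` negates the operator, which turns this into the eigenvalue `-μ`.
-/

open scoped InnerProductSpace
open ComplexConjugate RCLike Module.End

section RankOneDifference

variable {𝕜 H : Type*} [RCLike 𝕜] [NormedAddCommGroup H] [InnerProductSpace 𝕜 H]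

theorem hasEigenvector_rankOne_sub (ψ φ : H) (hψ : ‖ψ‖ = 1) (hφ : ‖φ‖ = 1)
    (hover : ‖⟪ψ, φ⟫_𝕜‖ < 1) (T : H →ₗ[𝕜] H) (hT : ∀ x : H, T x = ⟪ψ, x⟫_𝕜 • ψ - ⟪φ, x⟫_𝕜 • φ) :
    HasEigenvector T (√(1 - ‖⟪ψ, φ⟫_𝕜‖ ^ 2) : 𝕜)
      (((√(1 - ‖⟪ψ, φ⟫_𝕜‖ ^ 2) : 𝕜) + 1) • ψ - conj ⟪ψ, φ⟫_𝕜 • φ) := by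
  set c := ⟪ψ, φ⟫_𝕜
  set μ := √(1 - ‖c‖ ^ 2)
  have hμ_pos : 0 < μ := Real.sqrt_pos.2 (by nlinarith [norm_nonneg c])
  have hμ_sq : (μ : 𝕜) ^ 2 = 1 - conj c * c := by
    rw [RCLike.conj_mul, ← ofReal_pow, Real.sq_sqrt (by nlinarith [norm_nonneg c])]
    push_cast; ring
  set v := ((μ : 𝕜) + 1) • ψ - conj c • φ
  have hψv : ⟪ψ, v⟫_𝕜 = μ * (μ + 1) := by
    simp only [v, inner_sub_right, inner_smul_right, inner_self_eq_one_of_norm_eq_one hψ]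
    linear_combination -hμ_sq
  have hφv : ⟪φ, v⟫_𝕜 = μ * conj c := by
    simp only [v, inner_sub_right, inner_smul_right, inner_self_eq_one_of_norm_eq_one hφ]
    rw [← inner_conj_symm φ ψ]
    ring
  refine ⟨?_, fun hv ↦ ?_⟩
  · rw [mem_eigenspace_iff, hT, hψv, hφv]
    module
  · have : (μ : 𝕜) * (μ + 1) ≠ 0 := by
      rw [← ofReal_one, ← ofReal_add, ← ofReal_mul, ofReal_ne_zero]
      positivity
    rw [← hψv, hv, inner_zero_right] at this
    exact this rfl

end RankOneDifference

/-- The difference `P_ψ − P_φ` of the rank-one projections onto two unit vectors with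
`|⟨ψ, φ⟩| < 1` has eigenvalues `±√(1 − |⟨ψ, φ⟩|²)`. -/
theorem proj_diff_eigenvalues
    {H : Type*} [NormedAddCommGroup H] [InnerProductSpace ℂ H]
    (ψ φ : H) (hψ : ‖ψ‖ = 1) (hφ : ‖φ‖ = 1) (hover : ‖⟪ψ, φ⟫‖ < 1)
    (T : H →ₗ[ℂ] H)
    (hT : ∀ x : H, T x = ⟪ψ, x⟫ • ψ - ⟪φ, x⟫ • φ) :
    Module.End.HasEigenvalue T (Real.sqrt (1 - ‖⟪ψ, φ⟫‖ ^ 2) : ℂ) ∧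
      Module.End.HasEigenvalue T (-(Real.sqrt (1 - ‖⟪ψ, φ⟫‖ ^ 2) : ℂ)) := by
  have hswap : ∀ x, (-T) x = ⟪φ, x⟫ • φ - ⟪ψ, x⟫ • ψ := fun x ↦ by simp [hT]
  refine ⟨hasEigenvalue_of_hasEigenvector (hasEigenvector_rankOne_sub ψ φ hψ hφ hover T hT), ?_⟩
  rw [← hasEigenvalue_neg_iff, norm_inner_symm]
  exact hasEigenvalue_of_hasEigenvector <|
    hasEigenvector_rankOne_sub φ ψ hφ hψ (by rwa [norm_inner_symm]) (-T) hswap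
end

section
/- Let H be a complex Hilbert space, let e₀ and e₁ be orthonormal vectors in H, let θ be a real number, and let T : H → H be a continuous linear map satisfying T e₀ = cos θ • e₀ + sin θ • e₁, T e₁ = −sin θ • e₀ + cos θ • e₁, and T x = x for every x orthogonal to both e₀ and e₁. Then ‖T − id‖ = 2·|sin(θ/2)|; in particular, if cos θ ≥ 0 then ‖T − id‖ ≤ √2 · √(1 − cos²θ). -/
open scoped ComplexInnerProductSpace InnerProductSpace ComplexConjugate

/-!
`D = T - id` vanishes on `{e₀, e₁}ᗮ` and sends `e₀, e₁` to the orthogonal vectors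
`(cos θ - 1) e₀ + sin θ e₁` and `-sin θ e₀ + (cos θ - 1) e₁`, both of length
`√(2 - 2 cos θ) = 2|sin(θ/2)|`. Writing `x = a e₀ + b e₁ + y` with `y ⊥ e₀, e₁` gives
`‖D x‖² = (|a|² + |b|²)·4 sin²(θ/2) ≤ 4 sin²(θ/2)‖x‖²` by Bessel, with equality at `x = e₀`.
For `cos θ ≥ 0`, `2 - 2 cos θ ≤ 2 (1 - cos θ)(1 + cos θ)`.
-/

section OrthonormalPair

variable {𝕜 E : Type*} [RCLike 𝕜] [NormedAddCommGroup E] [InnerProductSpace 𝕜 E]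

theorem norm_smul_add_smul_sq_of_inner_eq_zero {u v : E} (h : ⟪u, v⟫_𝕜 = 0) (a b : 𝕜) :
    ‖a • u + b • v‖ ^ 2 = ‖a‖ ^ 2 * ‖u‖ ^ 2 + ‖b‖ ^ 2 * ‖v‖ ^ 2 := by
  simp [@norm_add_sq 𝕜, inner_smul_left, inner_smul_right, h, norm_smul, mul_pow]

theorem inner_sub_proj_pair_eq_zero {e₀ e₁ : E} (he₀ : ‖e₀‖ = 1) (he₁ : ‖e₁‖ = 1)
    (hortho : ⟪e₀, e₁⟫_𝕜 = 0) (x : E) :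
    ⟪e₀, x - ⟪e₀, x⟫_𝕜 • e₀ - ⟪e₁, x⟫_𝕜 • e₁⟫_𝕜 = 0 ∧
      ⟪e₁, x - ⟪e₀, x⟫_𝕜 • e₀ - ⟪e₁, x⟫_𝕜 • e₁⟫_𝕜 = 0 := by
  have hortho' : ⟪e₁, e₀⟫_𝕜 = 0 := inner_eq_zero_symm.mp hortho
  constructor <;> simp [inner_sub_right, inner_smul_right, inner_self_eq_norm_sq_to_K, he₀, he₁,
    hortho, hortho']

theorem norm_inner_sq_add_norm_inner_sq_le {e₀ e₁ : E} (he₀ : ‖e₀‖ = 1) (he₁ : ‖e₁‖ = 1)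
    (hortho : ⟪e₀, e₁⟫_𝕜 = 0) (x : E) :
    ‖⟪e₀, x⟫_𝕜‖ ^ 2 + ‖⟪e₁, x⟫_𝕜‖ ^ 2 ≤ ‖x‖ ^ 2 := by
  set p := ⟪e₀, x⟫_𝕜 • e₀ + ⟪e₁, x⟫_𝕜 • e₁
  obtain ⟨hy₀, hy₁⟩ := inner_sub_proj_pair_eq_zero he₀ he₁ hortho x
  have hpy : ⟪p, x - p⟫_𝕜 = 0 := by
    simp only [p, ← sub_sub, inner_add_left, inner_smul_left, hy₀, hy₁, mul_zero, add_zero]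
  have hx : ‖x‖ ^ 2 = ‖p‖ ^ 2 + ‖x - p‖ ^ 2 := by
    simpa [hpy] using @norm_add_sq 𝕜 _ _ _ _ p (x - p)
  rw [hx, norm_smul_add_smul_sq_of_inner_eq_zero hortho, he₀, he₁]
  nlinarith [sq_nonneg ‖x - p‖]

theorem inner_smul_add_smul_smul_add_smul {e₀ e₁ : E} (he₀ : ‖e₀‖ = 1) (he₁ : ‖e₁‖ = 1)
    (hortho : ⟪e₀, e₁⟫_𝕜 = 0) (a b c d : 𝕜) :
    ⟪a • e₀ + b • e₁, c • e₀ + d • e₁⟫_𝕜 = conj a * c + conj b * d := by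
  have hortho' : ⟪e₁, e₀⟫_𝕜 = 0 := inner_eq_zero_symm.mp hortho
  simp [inner_add_left, inner_add_right, inner_smul_left, inner_smul_right,
    inner_self_eq_norm_sq_to_K, he₀, he₁, hortho, hortho', mul_comm]

theorem ContinuousLinearMap.opNorm_eq_of_orthogonal_images
    {F : Type*} [NormedAddCommGroup F] [InnerProductSpace 𝕜 F]
    {e₀ e₁ : E} (he₀ : ‖e₀‖ = 1) (he₁ : ‖e₁‖ = 1) (hortho : ⟪e₀, e₁⟫_𝕜 = 0)
    (D : E →L[𝕜] F) (hD : ∀ y, ⟪e₀, y⟫_𝕜 = 0 → ⟪e₁, y⟫_𝕜 = 0 → D y = 0)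
    (hDortho : ⟪D e₀, D e₁⟫_𝕜 = 0) {r : ℝ} (hr₀ : ‖D e₀‖ = r) (hr₁ : ‖D e₁‖ = r) :
    ‖D‖ = r := by
  have hr : 0 ≤ r := hr₀ ▸ norm_nonneg _
  refine le_antisymm (D.opNorm_le_bound hr fun x => ?_) ?_
  · set a := ⟪e₀, x⟫_𝕜
    set b := ⟪e₁, x⟫_𝕜
    obtain ⟨hy₀, hy₁⟩ := inner_sub_proj_pair_eq_zero he₀ he₁ hortho x
    have hDx : D x = a • D e₀ + b • D e₁ := by
      rw [← map_smul, ← map_smul, ← sub_eq_zero, ← map_add, ← map_sub, ← sub_sub]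
      exact hD _ hy₀ hy₁
    have hsq : ‖D x‖ ^ 2 ≤ (r * ‖x‖) ^ 2 := by
      rw [hDx, norm_smul_add_smul_sq_of_inner_eq_zero hDortho, hr₀, hr₁]
      nlinarith [norm_inner_sq_add_norm_inner_sq_le he₀ he₁ hortho x]
    exact pow_le_pow_iff_left₀ (norm_nonneg _) (by positivity) two_ne_zero |>.mp hsq
  · simpa [he₀, hr₀] using D.le_opNorm e₀

end OrthonormalPair

theorem sq_cos_sub_one_add_sq_sin (θ : ℝ) :
    (Real.cos θ - 1) ^ 2 + Real.sin θ ^ 2 = (2 * Real.sin (θ / 2)) ^ 2 := by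
  obtain ⟨t, rfl⟩ : ∃ t, θ = 2 * t := ⟨θ / 2, by ring⟩
  rw [mul_div_cancel_left₀ t two_ne_zero, Real.cos_two_mul, Real.sin_two_mul]
  linear_combination (4 * Real.cos t ^ 2 - 4) * Real.sin_sq_add_cos_sq t

theorem abs_two_mul_sin_half_le_sqrt_two_mul_sqrt {θ : ℝ} (hθ : 0 ≤ Real.cos θ) :
    |2 * Real.sin (θ / 2)| ≤ Real.sqrt 2 * Real.sqrt (1 - Real.cos θ ^ 2) := by
  rw [← Real.sqrt_mul zero_le_two, ← Real.sqrt_sq_eq_abs,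
    ← sq_cos_sub_one_add_sq_sin]
  gcongr
  nlinarith [Real.sin_sq_add_cos_sq θ, Real.cos_le_one θ]

theorem rotation_dist_to_id_general
    {H : Type*} [NormedAddCommGroup H] [InnerProductSpace ℂ H]
    (e₀ e₁ : H) (he₀ : ‖e₀‖ = 1) (he₁ : ‖e₁‖ = 1) (hortho : ⟪e₀, e₁⟫ = 0)
    (θ : ℝ) (T : H →L[ℂ] H)
    (hTe₀ : T e₀ = (Real.cos θ : ℂ) • e₀ + (Real.sin θ : ℂ) • e₁)
    (hTe₁ : T e₁ = -(Real.sin θ : ℂ) • e₀ + (Real.cos θ : ℂ) • e₁)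
    (hTperp : ∀ x : H, ⟪e₀, x⟫ = 0 → ⟪e₁, x⟫ = 0 → T x = x) :
    ‖T - ContinuousLinearMap.id ℂ H‖ = 2 * |Real.sin (θ / 2)| ∧
      (0 ≤ Real.cos θ →
        ‖T - ContinuousLinearMap.id ℂ H‖
          ≤ Real.sqrt 2 * Real.sqrt (1 - Real.cos θ ^ 2)) := by
  have hD₀ : (T - ContinuousLinearMap.id ℂ H) e₀ =
      ((Real.cos θ - 1 : ℝ) : ℂ) • e₀ + (Real.sin θ : ℂ) • e₁ := by
    simp only [sub_apply, ContinuousLinearMap.id_apply, hTe₀]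
    push_cast
    module
  have hD₁ : (T - ContinuousLinearMap.id ℂ H) e₁ =
      -(Real.sin θ : ℂ) • e₀ + ((Real.cos θ - 1 : ℝ) : ℂ) • e₁ := by
    simp only [sub_apply, ContinuousLinearMap.id_apply, hTe₁]
    push_cast
    module
  have hnorm_sq : (Real.cos θ - 1) ^ 2 + Real.sin θ ^ 2 = (2 * |Real.sin (θ / 2)|) ^ 2 := by
    rw [sq_cos_sub_one_add_sq_sin, mul_pow, mul_pow, sq_abs]
  have hdist : ‖T - ContinuousLinearMap.id ℂ H‖ = 2 * |Real.sin (θ / 2)| := by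
    refine ContinuousLinearMap.opNorm_eq_of_orthogonal_images he₀ he₁ hortho _
      (fun y hy₀ hy₁ => by simp [hTperp y hy₀ hy₁]) ?_ ?_ ?_
    · rw [hD₀, hD₁, inner_smul_add_smul_smul_add_smul he₀ he₁ hortho]
      simp only [Complex.conj_ofReal]
      push_cast
      ring
    · rw [← sq_eq_sq₀ (norm_nonneg _) (by positivity), ← hnorm_sq, hD₀,
        norm_smul_add_smul_sq_of_inner_eq_zero hortho]
      simp only [Complex.norm_real, Real.norm_eq_abs, sq_abs, he₀, he₁, one_pow, mul_one]
    · rw [← sq_eq_sq₀ (norm_nonneg _) (by positivity), ← hnorm_sq, hD₁,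
        norm_smul_add_smul_sq_of_inner_eq_zero hortho]
      simp only [norm_neg, Complex.norm_real, Real.norm_eq_abs, sq_abs, he₀, he₁, one_pow, mul_one]
      ring
  refine ⟨hdist, fun hc => ?_⟩
  simpa [hdist, abs_mul] using abs_two_mul_sin_half_le_sqrt_two_mul_sqrt hc

/-- A unitary acting as a rotation by angle `θ` on the plane spanned by the orthonormal
pair `e₀, e₁` and as the identity on its orthogonal complement is at operator-norm
distance `2·|sin(θ/2)|` from the identity; in particular, if `cos θ ≥ 0` this distance
is at most `√2·√(1 − cos²θ)`. -/
theorem rotation_dist_to_id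
    {H : Type*} [NormedAddCommGroup H] [InnerProductSpace ℂ H] [CompleteSpace H]
    (e₀ e₁ : H) (he₀ : ‖e₀‖ = 1) (he₁ : ‖e₁‖ = 1) (hortho : ⟪e₀, e₁⟫ = 0)
    (θ : ℝ) (T : H →L[ℂ] H)
    (hTe₀ : T e₀ = (Real.cos θ : ℂ) • e₀ + (Real.sin θ : ℂ) • e₁)
    (hTe₁ : T e₁ = -(Real.sin θ : ℂ) • e₀ + (Real.cos θ : ℂ) • e₁)
    (hTperp : ∀ x : H, ⟪e₀, x⟫ = 0 → ⟪e₁, x⟫ = 0 → T x = x) :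
    ‖T - ContinuousLinearMap.id ℂ H‖ = 2 * |Real.sin (θ / 2)| ∧
      (0 ≤ Real.cos θ →
        ‖T - ContinuousLinearMap.id ℂ H‖
          ≤ Real.sqrt 2 * Real.sqrt (1 - Real.cos θ ^ 2)) :=
  rotation_dist_to_id_general e₀ e₁ he₀ he₁ hortho θ T hTe₀ hTe₁ hTperp
end
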